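/- arXiv:2302.08949 — 2 statements merged into one kernel-verified Lean document; each statement's English description precedes it below -/
import Mathlib

section
/- Let G be a finite group acting on a simplicial set X, and let H ≤ G. If a point of the geometric realization |X| is fixed by H, then it can be represented by a pair (x, t) where x is an H-fixed simplex of X; consequently the natural map |X^H| → |X|^H is surjective (and in fact a homeomorphism). -/
open CategoryTheory

/-- The `H`-fixed sub-simplicial set `X^H` of a simplicial set `X` with `G`-action
`ρ : G →* Aut X`: its simplices are the levelwise `H`-fixed simplices of `X`. -/
def fixedSSet (X : SSet) {G : Type*} [Group G] (ρ : G →* Aut X)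
    (H : Subgroup G) : SSet where
  obj Δ := {x : X.obj Δ // ∀ h ∈ H, (ρ h).hom.app Δ x = x}
  map f := TypeCat.ofHom fun x => ⟨X.map f x.1, fun h hh => by
    rw [FunctorToTypes.naturality, x.2 h hh]⟩
  map_id := by
    intro Δ
    ext x
    change X.map (𝟙 Δ) x.1 = x.1
    simp
  map_comp := by
    intro _ _ _ f g
    ext x
    change X.map (f ≫ g) x.1 = X.map g (X.map f x.1)
    simp

/-- The inclusion `X^H ⟶ X` of simplicial sets. -/
def fixedInclusion (X : SSet) {G : Type*} [Group G] (ρ : G →* Aut X)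
    (H : Subgroup G) : fixedSSet X ρ H ⟶ X where
  app Δ := TypeCat.ofHom fun x => x.1
  naturality := by intros; rfl

/-!
A point of `|X|` is the image `|x|(t)` of barycentric coordinates `t` under a simplex `x`.
Passing to the face of `x` spanned by the support of `t`, and then to the nondegenerate simplex
of which that face is a degeneracy (Eilenberg–Zilber), gives a representative with `x`
nondegenerate and `t` interior. This normal form is invariant under the identifications
`(f^* x, s) ~ (x, f_* s)` that define `|X|`, so it is a function of the point, and it commutes
with automorphisms of `X`, which preserve nondegeneracy. So if `H` fixes the point, it fixes the
simplex of its normal form, which is therefore a simplex of `X^H`.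
-/

universe u

open Simplicial Opposite

namespace stdSimplex

variable {X Y : Type*} [Fintype X] [Fintype Y]

lemma map_apply_of_injective {f : X → Y} (hf : Function.Injective f) (s : stdSimplex ℝ X)
    (x : X) : map f s (f x) = s x := by
  classical
  rw [map_coe, FunOnFinite.linearMap_apply_apply, Finset.sum_eq_single_of_mem x (by simp)
    fun x' hx' hne => (hne (hf (by simpa using hx'))).elim]

lemma map_apply_of_notMem_range {f : X → Y} {y : Y} (hy : y ∉ Set.range f)
    (s : stdSimplex ℝ X) : map f s y = 0 := by
  classical
  rw [map_coe, FunOnFinite.linearMap_apply_apply]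
  exact Finset.sum_eq_zero fun x hx => (hy ⟨x, by simpa using hx⟩).elim

lemma map_hom_comp {a b c : SimplexCategory} (f : a ⟶ b) (g : b ⟶ c)
    (s : stdSimplex ℝ (Fin (a.len + 1))) : map (f ≫ g) s = map g (map f s) := by
  rw [map_comp_apply]
  rfl

def IsInterior (s : stdSimplex ℝ X) : Prop := ∀ x, 0 < s x

lemma IsInterior.map {f : X → Y} (hf : Function.Surjective f) {s : stdSimplex ℝ X}
    (hs : IsInterior s) : IsInterior (stdSimplex.map f s) := by
  classical
  intro y
  obtain ⟨x, rfl⟩ := hf y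
  rw [map_coe, FunOnFinite.linearMap_apply_apply]
  exact (hs x).trans_le (Finset.single_le_sum (fun x' _ => zero_le s x') (by simp))

lemma IsInterior.range_eq_setOf_pos {f : X → Y} (hf : Function.Injective f)
    {s : stdSimplex ℝ X} (hs : IsInterior s) : Set.range f = {y | 0 < stdSimplex.map f s y} := by
  ext y
  refine ⟨?_, fun hy => ?_⟩
  · rintro ⟨x, rfl⟩
    show 0 < stdSimplex.map f s (f x)
    rw [map_apply_of_injective hf]
    exact hs x
  · by_contra hy'
    exact hy.ne' (map_apply_of_notMem_range hy' s)

lemma exists_mono_map_eq {n : ℕ} (t : stdSimplex ℝ (Fin (n + 1))) :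
    ∃ (a : ℕ) (j : ⦋a⦌ ⟶ ⦋n⦌) (s : stdSimplex ℝ (Fin (a + 1))),
      Mono j ∧ IsInterior s ∧ map j s = t := by
  classical
  set S := Finset.univ.filter (fun i => 0 < t i)
  have hS : S.Nonempty := by
    obtain ⟨i, hi⟩ : ∃ i, 0 < t i := by
      by_contra! h
      exact absurd (Finset.sum_nonpos fun i (_ : i ∈ Finset.univ) => h i) (by simp)
    exact ⟨i, by simpa [S] using hi⟩
  obtain ⟨a, ha⟩ : ∃ a, S.card = a + 1 := Nat.exists_eq_succ_of_ne_zero hS.card_pos.ne'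
  set E := S.orderEmbOfFin ha
  have hsum : ∑ i, t (E i) = 1 := calc
    ∑ i, t (E i) = ∑ y ∈ S, t y := by rw [← S.map_orderEmbOfFin_univ ha, Finset.sum_map]; rfl
    _ = 1 := by rw [Finset.sum_filter_of_ne fun i _ hi => (zero_le t i).lt_of_ne' hi, sum_eq_one]
  let j : ⦋a⦌ ⟶ ⦋n⦌ := SimplexCategory.mkHom E.toOrderHom
  have hj : Function.Injective j := E.injective
  have hrange : Set.range j = S := S.range_orderEmbOfFin ha
  refine ⟨a, j, ⟨t ∘ E, fun i => zero_le t _, hsum⟩, SimplexCategory.mono_iff_injective.mpr hj,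
    fun i => (Finset.mem_filter.mp (S.orderEmbOfFin_mem ha i)).2, ?_⟩
  ext y
  by_cases hy : y ∈ Set.range j
  · obtain ⟨i, rfl⟩ := hy
    exact map_apply_of_injective hj _ i
  · have hyS : ¬ 0 < t y := fun h => hy (hrange ▸ by simpa [S] using h)
    rw [map_apply_of_notMem_range hy]
    exact (le_antisymm (not_lt.mp hyS) (zero_le t y)).symm

lemma eq_of_map_eq_map {n a a' : ℕ} {j : ⦋a⦌ ⟶ ⦋n⦌} {j' : ⦋a'⦌ ⟶ ⦋n⦌} [Mono j] [Mono j']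
    {s : stdSimplex ℝ (Fin (a + 1))} {s' : stdSimplex ℝ (Fin (a' + 1))}
    (hs : IsInterior s) (hs' : IsInterior s') (h : map j s = map j' s') :
    (⟨a, j, s⟩ : Σ a, (⦋a⦌ ⟶ ⦋n⦌) × stdSimplex ℝ (Fin (a + 1))) = ⟨a', j', s'⟩ := by
  have hj : Function.Injective j := SimplexCategory.mono_iff_injective.mp ‹_›
  have hj' : Function.Injective j' := SimplexCategory.mono_iff_injective.mp ‹_›
  have hrange : Set.range j = Set.range j' := by
    rw [hs.range_eq_setOf_pos hj, hs'.range_eq_setOf_pos hj', h]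
  obtain rfl : a = a' := by
    have := congrArg (fun S : Set (Fin (n + 1)) => Nat.card S) hrange
    simp only [Nat.card_range_of_injective hj, Nat.card_range_of_injective hj',
      Nat.card_eq_fintype_card, Fintype.card_fin] at this
    omega
  obtain rfl : j = j' := SimplexCategory.Hom.ext _ _ <| OrderHom.ext _ _ <|
    ((j.toOrderHom.monotone.strictMono_of_injective hj).range_inj
      (j'.toOrderHom.monotone.strictMono_of_injective hj')).mp hrange
  obtain rfl : s = s' := by
    ext i
    rw [← map_apply_of_injective hj s i, h, map_apply_of_injective hj s' i]
  rfl

end stdSimplex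

namespace SSet

open Limits

open _root_.stdSimplex (IsInterior exists_mono_map_eq eq_of_map_eq_map map_hom_comp)

variable {X Y : SSet.{u}}

lemma eq_of_nonDegenerate_map_eq {n m₁ m₂ : ℕ} {f₁ : ⦋n⦌ ⟶ ⦋m₁⦌} {f₂ : ⦋n⦌ ⟶ ⦋m₂⦌}
    [Epi f₁] [Epi f₂] {y₁ : X _⦋m₁⦌} {y₂ : X _⦋m₂⦌} (hy₁ : y₁ ∈ X.nonDegenerate m₁)
    (hy₂ : y₂ ∈ X.nonDegenerate m₂) (h : X.map f₁.op y₁ = X.map f₂.op y₂) :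
    (⟨m₁, f₁, y₁⟩ : Σ m, (⦋n⦌ ⟶ ⦋m⦌) × X _⦋m⦌) = ⟨m₂, f₂, y₂⟩ := by
  obtain rfl := X.unique_nonDegenerate_dim _ f₁ ⟨y₁, hy₁⟩ rfl f₂ ⟨y₂, hy₂⟩ h
  obtain rfl := X.unique_nonDegenerate_map _ f₁ ⟨y₁, hy₁⟩ rfl f₂ ⟨y₂, hy₂⟩ h
  cases X.unique_nonDegenerate_simplex _ f₁ ⟨y₁, hy₁⟩ rfl f₁ ⟨y₂, hy₂⟩ h
  rfl

variable (X) in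
abbrev PointRep : Type u := Σ n : ℕ, X _⦋n⦌ × _root_.stdSimplex ℝ (Fin (n + 1))

namespace PointRep

def map (φ : X ⟶ Y) (r : PointRep X) : PointRep Y := ⟨r.1, φ.app _ r.2.1, r.2.2⟩

lemma map_eq_self_iff {r : PointRep X} {φ : X ⟶ X} : r.map φ = r ↔ φ.app _ r.2.1 = r.2.1 := by
  obtain ⟨n, x, t⟩ := r
  simp [PointRep.map]

def IsNormal (r : PointRep X) : Prop :=
  r.2.1 ∈ X.nonDegenerate r.1 ∧ IsInterior r.2.2

/-- `r'` comes from `r` by restricting to the face `j` of `r.2.1` spanned by the support of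
`r.2.2`, then writing that face as the degeneracy `σ` of `r'.2.1`. -/
def Reduces (r r' : PointRep X) : Prop :=
  ∃ (a : ℕ) (j : ⦋a⦌ ⟶ ⦋r.1⦌) (σ : ⦋a⦌ ⟶ ⦋r'.1⦌) (_ : Mono j) (_ : Epi σ)
    (s : _root_.stdSimplex ℝ (Fin (a + 1))), IsInterior s ∧ _root_.stdSimplex.map j s = r.2.2 ∧
      X.map j.op r.2.1 = X.map σ.op r'.2.1 ∧ _root_.stdSimplex.map σ s = r'.2.2

lemma exists_reduces (r : PointRep X) : ∃ r', IsNormal r' ∧ Reduces r r' := by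
  obtain ⟨n, x, t⟩ := r
  obtain ⟨a, j, s, _, hs, hjs⟩ := exists_mono_map_eq t
  obtain ⟨m, σ, _, z, hz⟩ := X.exists_nonDegenerate (X.map j.op x)
  exact ⟨⟨m, z, _root_.stdSimplex.map σ s⟩,
    ⟨z.2, hs.map (SimplexCategory.epi_iff_surjective.mp ‹_›)⟩,
    a, j, σ, inferInstance, inferInstance, s, hs, hjs, hz, rfl⟩

lemma Reduces.unique {r r₁ r₂ : PointRep X} (h₁ : Reduces r r₁) (h₂ : Reduces r r₂)
    (hr₁ : IsNormal r₁) (hr₂ : IsNormal r₂) : r₁ = r₂ := by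
  obtain ⟨n, x, t⟩ := r
  obtain ⟨k₁, z₁, t₁⟩ := r₁
  obtain ⟨k₂, z₂, t₂⟩ := r₂
  obtain ⟨a, j, σ, _, _, s, hs, hjs, hx, hσs⟩ := h₁
  obtain ⟨a', j', σ', _, _, s', hs', hjs', hx', hσs'⟩ := h₂
  dsimp only at *
  cases eq_of_map_eq_map hs hs' (hjs.trans hjs'.symm)
  cases eq_of_nonDegenerate_map_eq hr₁.1 hr₂.1 (hx.symm.trans hx')
  rw [← hσs, ← hσs']

lemma Reduces.of_pullback {n m : ℕ} (f : ⦋n⦌ ⟶ ⦋m⦌) (x : X _⦋m⦌)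
    (s : _root_.stdSimplex ℝ (Fin (n + 1))) {r : PointRep X}
    (h : Reduces ⟨n, X.map f.op x, s⟩ r) (hr : IsNormal r) :
    Reduces ⟨m, x, _root_.stdSimplex.map f s⟩ r := by
  obtain ⟨k, z, t⟩ := r
  obtain ⟨a, j, σ, _, _, s₀, hs₀, hjs, hx, hσs⟩ := h
  dsimp only at *
  -- The face of `x` carrying `f_* s` is the image `i` of `j ≫ f`, of which `j ≫ f` is a
  -- degeneracy `e`; the degeneracy of `i^* x` then agrees with `σ` by Eilenberg–Zilber.
  set e := factorThruImage (j ≫ f)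
  set i := image.ι (j ≫ f)
  have hfac : e ≫ i = j ≫ f := image.fac _
  obtain ⟨l, τ, _, ⟨y, hy_nd⟩, hy⟩ := X.exists_nonDegenerate (X.map i.op x)
  have hy' : X.map (e ≫ τ).op y = X.map σ.op z := calc
    X.map (e ≫ τ).op y = X.map (e ≫ i).op x := by simp only [op_comp, Functor.map_comp_apply, hy]
    _ = X.map σ.op z := by rw [hfac, op_comp, Functor.map_comp_apply, hx]
  cases eq_of_nonDegenerate_map_eq hy_nd hr.1 hy'
  refine ⟨_, i, τ, inferInstance, inferInstance, _root_.stdSimplex.map e s₀,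
    hs₀.map (SimplexCategory.epi_iff_surjective.mp inferInstance), ?_, hy, ?_⟩
  · rw [← map_hom_comp, hfac, map_hom_comp, hjs]
  · rw [← map_hom_comp, hσs]

lemma Reduces.map {r r' : PointRep X} (h : Reduces r r') (φ : X ⟶ Y) :
    Reduces (r.map φ) (r'.map φ) := by
  obtain ⟨a, j, σ, hj, hσ, s, hs, hjs, hx, hσs⟩ := h
  refine ⟨a, j, σ, hj, hσ, s, hs, hjs, ?_, hσs⟩
  change Y.map j.op (φ.app _ r.2.1) = Y.map σ.op (φ.app _ r'.2.1)
  rw [← NatTrans.naturality_apply φ j.op, ← NatTrans.naturality_apply φ σ.op, hx]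

lemma IsNormal.map {r : PointRep X} (hr : IsNormal r) (φ : X ⟶ Y) [IsIso φ] :
    IsNormal (r.map φ) :=
  ⟨(nonDegenerate_iff_of_isIso φ _).mpr hr.1, hr.2⟩

noncomputable def normalForm (r : PointRep X) : PointRep X := (exists_reduces r).choose

lemma isNormal_normalForm (r : PointRep X) : IsNormal r.normalForm :=
  (exists_reduces r).choose_spec.1

lemma reduces_normalForm (r : PointRep X) : Reduces r r.normalForm :=
  (exists_reduces r).choose_spec.2

lemma normalForm_eq_of_reduces {r r' : PointRep X} (h : Reduces r r') (hr' : IsNormal r') :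
    r.normalForm = r' :=
  r.reduces_normalForm.unique h r.isNormal_normalForm hr'

lemma normalForm_pullback {n m : ℕ} (f : ⦋n⦌ ⟶ ⦋m⦌) (x : X _⦋m⦌)
    (s : _root_.stdSimplex ℝ (Fin (n + 1))) :
    normalForm ⟨n, X.map f.op x, s⟩ = normalForm ⟨m, x, _root_.stdSimplex.map f s⟩ :=
  (normalForm_eq_of_reduces ((reduces_normalForm _).of_pullback f x s (isNormal_normalForm _))
    (isNormal_normalForm _)).symm

lemma normalForm_map (r : PointRep X) (φ : X ⟶ Y) [IsIso φ] :
    (r.map φ).normalForm = r.normalForm.map φ :=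
  normalForm_eq_of_reduces (r.reduces_normalForm.map φ) (r.isNormal_normalForm.map φ)

noncomputable def toTop (r : PointRep X) : |X| :=
  SSet.toTop.map (yonedaEquiv.symm r.2.1) (⦋r.1⦌.toTopHomeo.symm r.2.2)

lemma toTop_map (r : PointRep X) (φ : X ⟶ Y) : (r.map φ).toTop = SSet.toTop.map φ r.toTop := by
  have h : yonedaEquiv.symm r.2.1 ≫ φ = yonedaEquiv.symm (φ.app _ r.2.1) := yonedaEquiv.injective
    (by rw [yonedaEquiv_comp, Equiv.apply_symm_apply, Equiv.apply_symm_apply])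
  change _ = SSet.toTop.map φ (SSet.toTop.map (yonedaEquiv.symm r.2.1) (⦋r.1⦌.toTopHomeo.symm r.2.2))
  rw [← ConcreteCategory.comp_apply, ← Functor.map_comp, h]
  rfl

lemma toTop_pullback {n m : ℕ} (f : ⦋n⦌ ⟶ ⦋m⦌) (x : X _⦋m⦌)
    (s : _root_.stdSimplex ℝ (Fin (n + 1))) :
    toTop ⟨n, X.map f.op x, s⟩ = toTop ⟨m, x, _root_.stdSimplex.map f s⟩ := by
  change SSet.toTop.map _ _ = SSet.toTop.map _ _
  rw [← yonedaEquiv_symm_naturality_left, Functor.map_comp, ConcreteCategory.comp_apply,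
    SimplexCategory.toTopHomeo_symm_naturality_apply]

lemma Reduces.toTop_eq {r r' : PointRep X} (h : Reduces r r') : r.toTop = r'.toTop := by
  obtain ⟨n, x, t⟩ := r
  obtain ⟨k, z, t'⟩ := r'
  obtain ⟨a, j, σ, _, _, s, -, hjs, hx, hσs⟩ := h
  dsimp only at *
  rw [← hjs, ← hσs, ← toTop_pullback, hx, toTop_pullback]

end PointRep

variable (X) in
noncomputable def isColimitToTopMapCocone :
    IsColimit ((forget TopCat).mapCocone
      (SSet.toTop.mapCocone (Presheaf.coconeOfRepresentable X))) :=
  isColimitOfPreserves _ (isColimitOfPreserves _ (Presheaf.colimitOfRepresentable X))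

lemma PointRep.toTop_surjective : Function.Surjective (PointRep.toTop (X := X)) := by
  intro p
  obtain ⟨j, q, rfl⟩ := Types.jointly_surjective _ (isColimitToTopMapCocone X) p
  refine ⟨⟨_, j.unop.2, j.unop.1.unop.toTopHomeo q⟩, ?_⟩
  exact congrArg (SSet.toTop.map (yonedaEquiv.symm j.unop.2))
    (j.unop.1.unop.toTopHomeo.symm_apply_apply (q : |SSet.stdSimplex.obj j.unop.1.unop|))

variable (X) in
noncomputable def normalFormCocone :
    Cocone (Presheaf.functorToRepresentables X ⋙ SSet.toTop ⋙ forget TopCat) where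
  pt := PointRep X
  ι :=
    { app j := TypeCat.ofHom fun q =>
        PointRep.normalForm ⟨_, j.unop.2, j.unop.1.unop.toTopHomeo q⟩
      naturality {j₁ j₂} g := by
        ext q
        let f : j₁.unop.1.unop ⟶ j₂.unop.1.unop := g.unop.1.unop
        have hf : X.map f.op j₂.unop.2 = j₁.unop.2 := g.unop.2
        change PointRep.normalForm ⟨_, j₂.unop.2,
            j₂.unop.1.unop.toTopHomeo (SSet.toTop.map (SSet.stdSimplex.map f) q)⟩ =
          PointRep.normalForm ⟨_, j₁.unop.2, j₁.unop.1.unop.toTopHomeo q⟩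
        rw [SimplexCategory.toTopHomeo_naturality_apply f q, ← hf]
        exact (PointRep.normalForm_pullback f _ _).symm }

noncomputable def normalRep (p : |X|) : PointRep X :=
  (isColimitToTopMapCocone X).desc (normalFormCocone X) p

lemma normalRep_toTop (r : PointRep X) : normalRep r.toTop = r.normalForm := by
  obtain ⟨n, x, t⟩ := r
  have := ConcreteCategory.congr_hom ((isColimitToTopMapCocone X).fac (normalFormCocone X)
    (op (X.elementsMk (op ⦋n⦌) x))) (⦋n⦌.toTopHomeo.symm t)
  change normalRep _ = PointRep.normalForm ⟨n, x, ⦋n⦌.toTopHomeo (⦋n⦌.toTopHomeo.symm t)⟩ at this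
  rwa [Homeomorph.apply_symm_apply] at this

lemma toTop_normalRep (p : |X|) : (normalRep p).toTop = p := by
  obtain ⟨r, rfl⟩ := PointRep.toTop_surjective p
  rw [normalRep_toTop, ← r.reduces_normalForm.toTop_eq]

lemma normalRep_map (e : X ≅ Y) (p : |X|) :
    normalRep (SSet.toTop.map e.hom p) = (normalRep p).map e.hom := by
  obtain ⟨r, rfl⟩ := PointRep.toTop_surjective p
  rw [← PointRep.toTop_map, normalRep_toTop, normalRep_toTop, PointRep.normalForm_map]

end SSet

theorem stmt_16_general (X : SSet) (G : Type*) [Group G] (ρ : G →* Aut X)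
    (H : Subgroup G) (p : SSet.toTop.obj X)
    (hp : ∀ h ∈ H, (SSet.toTop.map (ρ h).hom) p = p) :
    ∃ q : SSet.toTop.obj (fixedSSet X ρ H),
      SSet.toTop.map (fixedInclusion X ρ H) q = p := by
  set r := SSet.normalRep p
  have hfixed : ∀ h ∈ H, (ρ h).hom.app _ r.2.1 = r.2.1 := fun h hh =>
    SSet.PointRep.map_eq_self_iff.mp (by rw [← SSet.normalRep_map (ρ h), hp h hh])
  exact ⟨SSet.PointRep.toTop ⟨r.1, ⟨r.2.1, hfixed⟩, r.2.2⟩,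
    (SSet.PointRep.toTop_map _ _).symm.trans (SSet.toTop_normalRep p)⟩

/-- For a finite group `G` acting on a simplicial set `X` and `H ≤ G`, every point of
the geometric realization `|X|` fixed by `H` is in the image of `|X^H| → |X|`: the
natural map `|X^H| → |X|^H` is surjective. -/
theorem stmt_16 (X : SSet) (G : Type*) [Group G] [Finite G] (ρ : G →* Aut X)
    (H : Subgroup G) (p : SSet.toTop.obj X)
    (hp : ∀ h ∈ H, (SSet.toTop.map (ρ h).hom) p = p) :
    ∃ q : SSet.toTop.obj (fixedSSet X ρ H),
      SSet.toTop.map (fixedInclusion X ρ H) q = p :=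
  stmt_16_general X G ρ H p hp
end

section
/- Let G be a finite group, H ≤ G, A = ⨿_{i=1}^n G/H with n > 1, and let α : A → A/G be the orbit quotient map. Suppose β : A → B is a G-equivariant surjection with B a transitive G-set whose point stabilizers are conjugate to H (so B ≅ G/H). Then there is no non-trivial G-equivariant common coarsening of α and β: any G-set C with trivial action receiving G-surjections from both B and A/G compatible with α, β must be a singleton, and any G-set D surjecting G-equivariantly onto A refining both α and β must have the partition induced by D equal the discrete partition of A. -/
/-- Orthogonality of the orbit partition `α = Prod.fst : ⨿_{i=1}^n G/H → A/G` and a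
partition `β : A → B` with `B` transitive with stabilizers conjugate to `H` (so
`B ≅ G/H`): any trivial common coarsening is a singleton, and any common refinement
induces the discrete partition of `A`. -/
theorem stmt_19 (G B : Type*) [Group G] [Finite G] (H : Subgroup G) (n : ℕ)
    (hn : 1 < n) [MulAction G B] [MulAction.IsPretransitive G B]
    (hB : ∀ b : B, ∃ g : G, ∀ x : G, x ∈ MulAction.stabilizer G b ↔ g⁻¹ * x * g ∈ H)
    (β : Fin n × (G ⧸ H) → B)
    (hβs : Function.Surjective β)
    (hβe : ∀ (g : G) (i : Fin n) (x : G ⧸ H), β (i, g • x) = g • β (i, x)) :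
    (∀ (C : Type*) [MulAction G C] (q₁ : B → C) (q₂ : Fin n → C),
      Function.Surjective q₁ → (∀ (g : G) (b : B), q₁ (g • b) = g • q₁ b) →
      Function.Surjective q₂ → (∀ (g : G) (i : Fin n), g • q₂ i = q₂ i) →
      (∀ (i : Fin n) (x : G ⧸ H), q₁ (β (i, x)) = q₂ i) →
      Subsingleton C) ∧
    (∀ (D : Type*) [MulAction G D] (δ : Fin n × (G ⧸ H) → D),
      Function.Surjective δ →
      (∀ (g : G) (i : Fin n) (x : G ⧸ H), δ (i, g • x) = g • δ (i, x)) →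
      ∀ (β' : D → B), (∀ (g : G) (d : D), β' (g • d) = g • β' d) →
      (∀ (i : Fin n) (x : G ⧸ H), β (i, x) = β' (δ (i, x))) →
      ∀ (α' : D → Fin n), (∀ (i : Fin n) (x : G ⧸ H), α' (δ (i, x)) = i) →
      Function.Injective δ) := by
  -- every stabilizer in B has the same cardinality as H
  have hcard : ∀ b : B, Nat.card (MulAction.stabilizer G b) = Nat.card H := by
    intro b
    obtain ⟨g, hg⟩ := hB b
    refine Nat.card_congr ⟨fun x => ⟨g⁻¹ * x * g, (hg x).1 x.2⟩,
      fun h => ⟨g * h * g⁻¹, (hg _).2 (by simp [mul_assoc])⟩, ?_, ?_⟩ <;>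
      · intro x; ext; simp [mul_assoc]
  -- the stabilizer of β (i, ((1 : G) : G ⧸ H)) is exactly H
  have hstab : ∀ i : Fin n, MulAction.stabilizer G (β (i, ((1 : G) : G ⧸ H))) = H := by
    intro i
    refine (Subgroup.eq_of_le_of_card_ge ?_ (hcard _).le).symm
    intro h hh
    have h1 : h • ((1 : G) : G ⧸ H) = ((1 : G) : G ⧸ H) := by
      rw [← MulAction.stabilizer_quotient H] at hh; exact hh
    show h • β (i, ((1 : G) : G ⧸ H)) = β (i, ((1 : G) : G ⧸ H))
    rw [← hβe, h1]
  -- β is injective in the second coordinate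
  have hβinj : ∀ (i : Fin n) (x y : G ⧸ H), β (i, x) = β (i, y) → x = y := by
    intro i x y hxy
    obtain ⟨a, rfl⟩ := QuotientGroup.mk_surjective x
    obtain ⟨b, rfl⟩ := QuotientGroup.mk_surjective y
    have hx : (a : G ⧸ H) = a • ((1 : G) : G ⧸ H) := by simp
    have hy : (b : G ⧸ H) = b • ((1 : G) : G ⧸ H) := by simp
    rw [hx, hy, hβe, hβe] at hxy
    have : b⁻¹ * a ∈ MulAction.stabilizer G (β (i, ((1 : G) : G ⧸ H))) := by
      show (b⁻¹ * a) • β (i, ((1 : G) : G ⧸ H)) = β (i, ((1 : G) : G ⧸ H))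
      rw [mul_smul, hxy, ← mul_smul, inv_mul_cancel, one_smul]
    rw [hstab i] at this
    exact QuotientGroup.eq.mpr (by simpa using Subgroup.inv_mem H this)
  constructor
  · intro C _ q₁ q₂ hs₁ he₁ hs₂ he₂ hcomp
    set i₀ : Fin n := ⟨0, by omega⟩ with hi₀
    have key : ∀ i : Fin n, q₂ i = q₂ i₀ := by
      intro i
      obtain ⟨g, hg⟩ := MulAction.exists_smul_eq G (β (i, ((1 : G) : G ⧸ H))) (β (i₀, ((1 : G) : G ⧸ H)))
      calc q₂ i = g • q₂ i := (he₂ g i).symm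
        _ = g • q₁ (β (i, ((1 : G) : G ⧸ H))) := by rw [hcomp]
        _ = q₁ (g • β (i, ((1 : G) : G ⧸ H))) := (he₁ g _).symm
        _ = q₁ (β (i₀, ((1 : G) : G ⧸ H))) := by rw [hg]
        _ = q₂ i₀ := hcomp i₀ ((1 : G) : G ⧸ H)
    constructor
    intro c c'
    obtain ⟨b, rfl⟩ := hs₁ c
    obtain ⟨b', rfl⟩ := hs₁ c'
    obtain ⟨⟨i, x⟩, rfl⟩ := hβs b
    obtain ⟨⟨j, y⟩, rfl⟩ := hβs b'
    rw [hcomp, hcomp, key i, key j]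
  · intro D _ δ hδs hδe β' hβ'e hcompβ α' hcompα
    rintro ⟨i, x⟩ ⟨j, y⟩ h
    have hij : i = j := by rw [← hcompα i x, ← hcompα j y, h]
    subst hij
    have : β (i, x) = β (i, y) := by rw [hcompβ, hcompβ, h]
    exact Prod.ext rfl (hβinj i x y this)
end
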